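/- arXiv:0905.4334 — 2 statements merged into one kernel-verified Lean document; each statement's English description precedes it below -/
import Mathlib

section
/- Let ξ₁,…,ξₙ be i.i.d. with continuous distribution function F supported on [0,1], and let Fₙ be the empirical distribution function. Then P( sup_{t∈[0,1]} |Fₙ(t) − F(t)| ≥ ε ) ≤ 2·exp( −n·[ (ε/8)·(log(1 + ε²/32) − 1) + (4/ε)·log(1 + ε²/32) ] ) for every ε > 0 (Kolmogorov-type exponential bound). -/
open MeasureTheory ProbabilityTheory

/-!
At a fixed point `s`, `n Fₙ(s)` is a sum of `n` independent Bernoulli(`F s`) variables, so by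
Hoeffding's inequality a one-sided deviation of size `a` has probability at most `exp (-2 n a²)`.
Since `F` is continuous, the generalized quantiles of the levels `j / m` (`j ≤ m`) bracket every
`t ∈ [0, 1]` by points `u ≤ t ≤ v` with `F t - F u` and `F v - F t` below `1 / m`; as `Fₙ` is
monotone, a deviation larger than `a + 1 / m` anywhere forces a deviation `a` at one of these
`2 (m + 1)` points. With `a = ε / 2` and `m = ⌈4 / ε⌉` the union bound gives
`2 (m + 1) exp (-n ε² / 2)`, which is below the claimed bound whenever that bound is below `1`,
because the claimed rate is at most `ε³ / 256`. For `ε > 1` the event is empty.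
-/

noncomputable section

section Quantile

variable {K : Set ℝ} {F : ℝ → ℝ} {t y : ℝ}

def lowerQuantile (K : Set ℝ) (F : ℝ → ℝ) (y : ℝ) : ℝ := sInf {x ∈ K | y ≤ F x}

def upperQuantile (K : Set ℝ) (F : ℝ → ℝ) (y : ℝ) : ℝ := sSup {x ∈ K | F x ≤ y}

lemma lowerQuantile_le_and_le_apply (hK : IsCompact K) (hF : ContinuousOn F K) (ht : t ∈ K)
    (hy : y ≤ F t) : lowerQuantile K F y ≤ t ∧ y ≤ F (lowerQuantile K F y) := by
  have hcpt : IsCompact {x ∈ K | y ≤ F x} :=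
    hK.of_isClosed_subset (hF.preimage_isClosed_of_isClosed hK.isClosed isClosed_Ici)
      Set.inter_subset_left
  exact ⟨csInf_le hcpt.bddBelow ⟨ht, hy⟩, (hcpt.sInf_mem ⟨t, ht, hy⟩).2⟩

lemma le_upperQuantile_and_apply_le (hK : IsCompact K) (hF : ContinuousOn F K) (ht : t ∈ K)
    (hy : F t ≤ y) : t ≤ upperQuantile K F y ∧ F (upperQuantile K F y) ≤ y := by
  have hcpt : IsCompact {x ∈ K | F x ≤ y} :=
    hK.of_isClosed_subset (hF.preimage_isClosed_of_isClosed hK.isClosed isClosed_Iic)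
      Set.inter_subset_left
  exact ⟨le_csSup hcpt.bddAbove ⟨ht, hy⟩, (hcpt.sSup_mem ⟨t, ht, hy⟩).2⟩

lemma abs_sub_lt_of_bracketing {G : ℝ → ℝ} (hK : IsCompact K) (hF : ContinuousOn F K)
    (hF01 : ∀ t ∈ K, F t ∈ Set.Icc 0 1) (hG : Monotone G) {m : ℕ} (hm : 0 < m) {a : ℝ}
    (hup : ∀ j ≤ m, G (upperQuantile K F (j / m)) < F (upperQuantile K F (j / m)) + a)
    (hlow : ∀ j ≤ m, F (lowerQuantile K F (j / m)) - a < G (lowerQuantile K F (j / m)))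
    (ht : t ∈ K) : |G t - F t| < a + 1 / m := by
  obtain ⟨hF0, hF1⟩ := hF01 t ht
  have hm' : (0 : ℝ) < m := by exact_mod_cast hm
  have hmF : 0 ≤ m * F t := by positivity
  have hmF1 : m * F t ≤ m := mul_le_of_le_one_right hm'.le hF1
  set i := ⌊m * F t⌋₊
  set j := ⌈m * F t⌉₊
  have hi : (i : ℝ) / m ≤ F t := by
    rw [div_le_iff₀' hm']; exact Nat.floor_le hmF
  have hi' : F t - 1 / m < i / m := by
    rw [show F t - 1 / m = (m * F t - 1) / m by field_simp]
    exact div_lt_div_of_pos_right (by linarith [Nat.lt_floor_add_one (m * F t)]) hm'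
  have hj : F t ≤ j / m := by
    rw [le_div_iff₀' hm']; exact Nat.le_ceil _
  have hj' : (j : ℝ) / m < F t + 1 / m := by
    rw [show F t + 1 / m = (m * F t + 1) / m by field_simp]
    exact div_lt_div_of_pos_right (Nat.ceil_lt_add_one hmF) hm'
  obtain ⟨hut, hFu⟩ := lowerQuantile_le_and_le_apply hK hF ht hi
  obtain ⟨htv, hFv⟩ := le_upperQuantile_and_apply_le hK hF ht hj
  have hGu := hlow i (Nat.floor_le_of_le hmF1)
  have hGv := hup j (Nat.ceil_le.2 hmF1)
  rw [abs_lt]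
  constructor <;> linarith [hG hut, hG htv]

end Quantile

section Empirical

variable {Ω : Type*} {mΩ : MeasurableSpace Ω}

def empiricalCDF (ξ : ℕ → Ω → ℝ) (n : ℕ) (ω : Ω) (t : ℝ) : ℝ :=
  (n : ℝ)⁻¹ * ∑ k ∈ Finset.range n, if ξ k ω ≤ t then (1 : ℝ) else 0

variable {ξ : ℕ → Ω → ℝ} {n : ℕ}

lemma empiricalCDF_mono (ω : Ω) : Monotone (empiricalCDF ξ n ω) := fun s t hst => by
  unfold empiricalCDF
  gcongr with k
  split_ifs with hs ht <;> first | exact absurd (hs.trans hst) ht | norm_num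

lemma empiricalCDF_mem_Icc (ω : Ω) (t : ℝ) : empiricalCDF ξ n ω t ∈ Set.Icc 0 1 := by
  have hsum : ∑ k ∈ Finset.range n, (if ξ k ω ≤ t then (1 : ℝ) else 0) ≤ n := by
    simpa using Finset.sum_le_sum fun k (_ : k ∈ Finset.range n) =>
      show (if ξ k ω ≤ t then (1 : ℝ) else 0) ≤ 1 by split_ifs <;> norm_num
  refine ⟨by unfold empiricalCDF; positivity, ?_⟩
  rcases n.eq_zero_or_pos with rfl | hn
  · simp [empiricalCDF]
  · exact inv_mul_le_one_of_le₀ hsum (Nat.cast_nonneg _)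

lemma empiricalCDF_sub_eq (hn : n ≠ 0) (ω : Ω) (t p : ℝ) :
    empiricalCDF ξ n ω t - p
      = (n : ℝ)⁻¹ * ∑ k ∈ Finset.range n, ((if ξ k ω ≤ t then (1 : ℝ) else 0) - p) := by
  rw [Finset.sum_sub_distrib, Finset.sum_const, Finset.card_range, nsmul_eq_mul, mul_sub,
    inv_mul_cancel_left₀ (Nat.cast_ne_zero.2 hn), empiricalCDF]

end Empirical

section Hoeffding

variable {Ω : Type*} {mΩ : MeasurableSpace Ω} {μ : Measure Ω}

lemma measureReal_le_average_le {Y : ℕ → Ω → ℝ} (hindep : iIndepFun Y μ) {c : NNReal}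
    (hY : ∀ k, HasSubgaussianMGF (Y k) c μ) {n : ℕ} (hn : n ≠ 0) {a : ℝ} (ha : 0 ≤ a) :
    μ.real {ω | a ≤ (n : ℝ)⁻¹ * ∑ k ∈ Finset.range n, Y k ω} ≤ Real.exp (-n * a ^ 2 / (2 * c)) := by
  have hnpos : (0 : ℝ) < n := by positivity
  have h := HasSubgaussianMGF.measure_sum_range_ge_le_of_iIndepFun hindep (c := c) (n := n)
    (fun k _ => hY k) (mul_nonneg hnpos.le ha)
  have hset : {ω | a ≤ (n : ℝ)⁻¹ * ∑ k ∈ Finset.range n, Y k ω}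
      = {ω | n * a ≤ ∑ k ∈ Finset.range n, Y k ω} := by
    ext ω; exact le_inv_mul_iff₀ hnpos
  rw [hset]
  refine h.trans_eq (congrArg Real.exp ?_)
  rcases eq_or_ne (c : ℝ) 0 with hc | hc
  · simp [hc]
  · field_simp

lemma hasSubgaussianMGF_indicator_sub [IsProbabilityMeasure μ] {X : Ω → ℝ} (hX : Measurable X)
    (s : ℝ) :
    HasSubgaussianMGF (fun ω => (if X ω ≤ s then (1 : ℝ) else 0) - μ.real {ω | X ω ≤ s})
      (1 / 4) μ := by
  have hA : MeasurableSet {ω | X ω ≤ s} := measurableSet_le hX measurable_const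
  have h := hasSubgaussianMGF_of_mem_Icc (μ := μ) (X := {ω | X ω ≤ s}.indicator 1) (a := 0)
    (b := 1) (measurable_const.indicator hA).aemeasurable
    (ae_of_all _ fun ω => by by_cases h : X ω ≤ s <;> simp [Set.indicator, h])
  rw [integral_indicator_one hA] at h
  convert h using 1
  · ext ω; simp [Set.indicator]
  · norm_num

end Hoeffding

section IID

variable {Ω : Type*} {mΩ : MeasurableSpace Ω} {μ : Measure Ω} {ξ : ℕ → Ω → ℝ}

lemma measureReal_le_eq_of_map_eq (hmeas : ∀ k, Measurable (ξ k))
    (hident : ∀ k, Measure.map (ξ k) μ = Measure.map (ξ 0) μ) (k : ℕ) (s : ℝ) :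
    μ.real {ω | ξ k ω ≤ s} = μ.real {ω | ξ 0 ω ≤ s} := by
  change μ.real (ξ k ⁻¹' Set.Iic s) = μ.real (ξ 0 ⁻¹' Set.Iic s)
  rw [← map_measureReal_apply (hmeas k) measurableSet_Iic, hident k,
    map_measureReal_apply (hmeas 0) measurableSet_Iic]

lemma iIndepFun_indicator_le_sub (hindep : iIndepFun ξ μ) (s p : ℝ) :
    iIndepFun (fun k ω => (if ξ k ω ≤ s then (1 : ℝ) else 0) - p) μ :=
  hindep.comp (fun _ x => (if x ≤ s then (1 : ℝ) else 0) - p)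
    fun _ => (Measurable.ite measurableSet_Iic measurable_const measurable_const).sub_const _

lemma hasSubgaussianMGF_indicator_le_sub_of_map_eq [IsProbabilityMeasure μ]
    (hmeas : ∀ k, Measurable (ξ k)) (hident : ∀ k, Measure.map (ξ k) μ = Measure.map (ξ 0) μ)
    (s : ℝ) (k : ℕ) :
    HasSubgaussianMGF (fun ω => (if ξ k ω ≤ s then (1 : ℝ) else 0) - μ.real {ω | ξ 0 ω ≤ s})
      (1 / 4) μ :=
  measureReal_le_eq_of_map_eq hmeas hident k s ▸ hasSubgaussianMGF_indicator_sub (hmeas k) s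

variable [IsProbabilityMeasure μ] (hmeas : ∀ k, Measurable (ξ k)) (hindep : iIndepFun ξ μ)
  (hident : ∀ k, Measure.map (ξ k) μ = Measure.map (ξ 0) μ)
include hmeas hindep hident

lemma measureReal_add_le_empiricalCDF_le {n : ℕ} (hn : n ≠ 0) {a : ℝ} (ha : 0 ≤ a) (s : ℝ) :
    μ.real {ω | μ.real {ω | ξ 0 ω ≤ s} + a ≤ empiricalCDF ξ n ω s}
      ≤ Real.exp (-2 * n * a ^ 2) := by
  convert measureReal_le_average_le (iIndepFun_indicator_le_sub hindep s _)
    (hasSubgaussianMGF_indicator_le_sub_of_map_eq hmeas hident s) hn ha using 2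
  · ext ω
    rw [Set.mem_ofPred_eq, Set.mem_ofPred_eq, ← empiricalCDF_sub_eq hn, le_sub_iff_add_le']
  · norm_num; ring

lemma measureReal_empiricalCDF_le_sub_le {n : ℕ} (hn : n ≠ 0) {a : ℝ} (ha : 0 ≤ a) (s : ℝ) :
    μ.real {ω | empiricalCDF ξ n ω s ≤ μ.real {ω | ξ 0 ω ≤ s} - a}
      ≤ Real.exp (-2 * n * a ^ 2) := by
  convert measureReal_le_average_le
    ((iIndepFun_indicator_le_sub hindep s _).comp (fun _ => Neg.neg) fun _ => measurable_neg)
    (fun k => (hasSubgaussianMGF_indicator_le_sub_of_map_eq hmeas hident s k).neg) hn ha using 2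
  · ext ω
    simp only [Set.mem_ofPred_eq, Function.comp_apply, Finset.sum_neg_distrib, mul_neg,
      ← empiricalCDF_sub_eq hn]
    constructor <;> intro h <;> linarith
  · norm_num; ring

lemma measureReal_lt_iSup_abs_empiricalCDF_sub_le {K : Set ℝ} (hK : IsCompact K)
    (hF : ContinuousOn (fun t => μ.real {ω | ξ 0 ω ≤ t}) K) {n : ℕ} (hn : n ≠ 0) {a : ℝ}
    (ha : 0 ≤ a) {m : ℕ} (hm : 0 < m) :
    μ.real {ω | a + 1 / m < ⨆ t : K, |empiricalCDF ξ n ω t - μ.real {ω | ξ 0 ω ≤ t}|}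
      ≤ 2 * (m + 1) * Real.exp (-2 * n * a ^ 2) := by
  set F : ℝ → ℝ := fun t => μ.real {ω | ξ 0 ω ≤ t}
  set u : ℕ → ℝ := fun j => lowerQuantile K F (j / m)
  set v : ℕ → ℝ := fun j => upperQuantile K F (j / m)
  set bad : ℕ → Set Ω := fun j => {ω | F (v j) + a ≤ empiricalCDF ξ n ω (v j)}
    ∪ {ω | empiricalCDF ξ n ω (u j) ≤ F (u j) - a}
  have hcover : {ω | a + 1 / m < ⨆ t : K, |empiricalCDF ξ n ω t - F t|}
      ⊆ ⋃ j ∈ Finset.range (m + 1), bad j := by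
    intro ω hω
    by_contra hgood
    simp only [Set.mem_iUnion, Finset.mem_range, Nat.lt_succ_iff, not_exists, bad,
      Set.mem_union, Set.mem_ofPred_eq, not_or, not_le] at hgood
    refine hω.not_ge (Real.iSup_le (fun t => ?_) (by positivity))
    exact (abs_sub_lt_of_bracketing hK hF (fun t _ => ⟨measureReal_nonneg, measureReal_le_one⟩)
      (empiricalCDF_mono ω) hm (fun j hj => (hgood j hj).1) (fun j hj => (hgood j hj).2) t.2).le
  calc μ.real {ω | a + 1 / m < ⨆ t : K, |empiricalCDF ξ n ω t - F t|}
      ≤ ∑ j ∈ Finset.range (m + 1), μ.real (bad j) :=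
        (measureReal_mono hcover (measure_ne_top _ _)).trans (measureReal_biUnion_finset_le _ _)
    _ ≤ ∑ j ∈ Finset.range (m + 1), 2 * Real.exp (-2 * n * a ^ 2) := by
        gcongr with j
        refine (measureReal_union_le _ _).trans ?_
        linarith [measureReal_add_le_empiricalCDF_le hmeas hindep hident hn ha (v j),
          measureReal_empiricalCDF_le_sub_le hmeas hindep hident hn ha (u j)]
    _ = 2 * (m + 1) * Real.exp (-2 * n * a ^ 2) := by
        rw [Finset.sum_const, Finset.card_range, nsmul_eq_mul]; push_cast; ring

end IID

lemma iSup_abs_empiricalCDF_sub_le_one {Ω : Type*} {mΩ : MeasurableSpace Ω} (μ : Measure Ω)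
    [IsProbabilityMeasure μ] (ξ : ℕ → Ω → ℝ) (n : ℕ) (K : Set ℝ) (ω : Ω) :
    ⨆ t : K, |empiricalCDF ξ n ω t - μ.real {ω | ξ 0 ω ≤ t}| ≤ 1 :=
  Real.iSup_le (fun t => abs_sub_le_of_nonneg_of_le (empiricalCDF_mem_Icc ω t).1
    (empiricalCDF_mem_Icc ω t).2 measureReal_nonneg measureReal_le_one) zero_le_one

def kolmogorovRate (ε : ℝ) : ℝ :=
  (ε / 8) * (Real.log (1 + ε ^ 2 / 32) - 1) + (4 / ε) * Real.log (1 + ε ^ 2 / 32)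

lemma kolmogorovRate_le {ε : ℝ} (hε : 0 < ε) : kolmogorovRate ε ≤ ε ^ 3 / 256 := by
  have hlog : Real.log (1 + ε ^ 2 / 32) ≤ ε ^ 2 / 32 := by
    linarith [Real.log_le_sub_one_of_pos (show 0 < 1 + ε ^ 2 / 32 by positivity)]
  calc kolmogorovRate ε = (ε / 8 + 4 / ε) * Real.log (1 + ε ^ 2 / 32) - ε / 8 := by
        unfold kolmogorovRate; ring
    _ ≤ (ε / 8 + 4 / ε) * (ε ^ 2 / 32) - ε / 8 := by gcongr
    _ = ε ^ 3 / 256 := by field_simp; ring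

lemma le_two_mul_exp_neg_mul_kolmogorovRate {ε n N x : ℝ} (hε : 0 < ε) (hε1 : ε ≤ 1)
    (hn : 0 ≤ n) (hN : N ≤ 6 / ε) (hx1 : x ≤ 1)
    (hxN : x ≤ 2 * N * Real.exp (-2 * n * (ε / 2) ^ 2)) :
    x ≤ 2 * Real.exp (-n * kolmogorovRate ε) := by
  set B := n * kolmogorovRate ε
  rcases le_or_gt B (Real.log 2) with hB | hB
  · calc x ≤ 2 * Real.exp (-Real.log 2) := by
          rw [Real.exp_neg, Real.exp_log two_pos]; linarith
      _ ≤ 2 * Real.exp (-n * kolmogorovRate ε) := by gcongr; linarith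
  · have hr : 1 ≤ ε⁻¹ := one_le_inv_iff₀.2 ⟨hε, hε1⟩
    have hB2 : 1 / 2 < B := by linarith [Real.log_two_gt_d9]
    have hdom : 128 * ε⁻¹ * B ≤ 2 * n * (ε / 2) ^ 2 := by
      calc 128 * ε⁻¹ * B ≤ 128 * ε⁻¹ * (n * (ε ^ 3 / 256)) := by
            gcongr; exact mul_le_mul_of_nonneg_left (kolmogorovRate_le hε) hn
        _ = 2 * n * (ε / 2) ^ 2 := by field_simp; ring
    have hN' : N ≤ Real.exp (2 * n * (ε / 2) ^ 2 - B) := by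
      calc N ≤ 6 * ε⁻¹ := by simpa [div_eq_mul_inv] using hN
        _ ≤ 63 * ε⁻¹ + 1 := by linarith
        _ ≤ Real.exp (63 * ε⁻¹) := by linarith [Real.add_one_le_exp (63 * ε⁻¹)]
        _ ≤ Real.exp (2 * n * (ε / 2) ^ 2 - B) := by gcongr; nlinarith
    calc x ≤ 2 * N * Real.exp (-2 * n * (ε / 2) ^ 2) := hxN
      _ ≤ 2 * Real.exp (2 * n * (ε / 2) ^ 2 - B) * Real.exp (-2 * n * (ε / 2) ^ 2) := by gcongr
      _ = 2 * Real.exp (-B) := by rw [mul_assoc, ← Real.exp_add]; ring_nf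
      _ = 2 * Real.exp (-n * kolmogorovRate ε) := by rw [neg_mul]

theorem stmt3_general {Ω : Type*} {mΩ : MeasurableSpace Ω} (μ : Measure Ω) [IsProbabilityMeasure μ]
    (ξ : ℕ → Ω → ℝ) (hmeas : ∀ k, Measurable (ξ k))
    (hindep : iIndepFun ξ μ)
    (hident : ∀ k, Measure.map (ξ k) μ = Measure.map (ξ 0) μ)
    (F : ℝ → ℝ) (hFdef : ∀ t, F t = (μ {ω | ξ 0 ω ≤ t}).toReal)
    (hFcont : Continuous F) :
    ∀ ε : ℝ, 0 < ε → ∀ n : ℕ, 1 ≤ n →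
      (μ {ω | ε ≤ ⨆ t : Set.Icc (0:ℝ) 1,
          |(n : ℝ)⁻¹ * (∑ k ∈ Finset.range n,
            (if ξ k ω ≤ (t : ℝ) then (1:ℝ) else 0)) - F t|}).toReal
        ≤ 2 * Real.exp (-(n : ℝ) *
            ((ε / 8) * (Real.log (1 + ε ^ 2 / 32) - 1)
              + (4 / ε) * Real.log (1 + ε ^ 2 / 32))) := by
  intro ε hε n hn
  obtain rfl : F = fun t => μ.real {ω | ξ 0 ω ≤ t} := funext hFdef
  change μ.real {ω | ε ≤ ⨆ t : Set.Icc (0:ℝ) 1, |empiricalCDF ξ n ω t - μ.real {ω | ξ 0 ω ≤ t}|}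
    ≤ 2 * Real.exp (-n * kolmogorovRate ε)
  rcases le_or_gt ε 1 with hε1 | hε1
  · set m := ⌈4 / ε⌉₊
    have hm : 4 / ε ≤ m := Nat.le_ceil _
    have hm0 : 0 < m := Nat.ceil_pos.2 (by positivity)
    have hgap : ε / 2 + 1 / m < ε := by
      have : 1 / (m : ℝ) ≤ ε / 4 := by
        rw [div_le_iff₀ (by positivity)]; rw [div_le_iff₀ hε] at hm; linarith
      linarith
    refine le_two_mul_exp_neg_mul_kolmogorovRate hε hε1 n.cast_nonneg (N := m + 1) ?_
      measureReal_le_one ?_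
    · linarith [Nat.ceil_lt_add_one (show 0 ≤ 4 / ε by positivity),
        show 2 ≤ 2 / ε by rw [le_div_iff₀ hε]; linarith, show 4 / ε + 2 / ε = 6 / ε by ring]
    · refine (measureReal_mono (fun ω (hω : ε ≤ _) => hgap.trans_le hω)
        (measure_ne_top _ _)).trans ?_
      exact measureReal_lt_iSup_abs_empiricalCDF_sub_le hmeas hindep hident isCompact_Icc
        hFcont.continuousOn (by omega) (by positivity) hm0
  · have hempty : {ω | ε ≤ ⨆ t : Set.Icc (0:ℝ) 1,
        |empiricalCDF ξ n ω t - μ.real {ω | ξ 0 ω ≤ t}|} = ∅ :=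
      Set.eq_empty_of_forall_notMem fun ω hω =>
        (hε1.trans_le hω).not_ge (iSup_abs_empiricalCDF_sub_le_one μ ξ n _ ω)
    rw [hempty, measureReal_empty]
    positivity

/-- Kolmogorov-type exponential bound for the uniform deviation of the
empirical distribution function from the continuous distribution function `F`. -/
theorem stmt3 {Ω : Type*} {mΩ : MeasurableSpace Ω} (μ : Measure Ω) [IsProbabilityMeasure μ]
    (ξ : ℕ → Ω → ℝ) (hmeas : ∀ k, Measurable (ξ k))
    (hindep : iIndepFun ξ μ)
    (hident : ∀ k, Measure.map (ξ k) μ = Measure.map (ξ 0) μ)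
    (hval : ∀ k ω, ξ k ω ∈ Set.Icc (0:ℝ) 1)
    (F : ℝ → ℝ) (hFdef : ∀ t, F t = (μ {ω | ξ 0 ω ≤ t}).toReal)
    (hFcont : Continuous F) :
    ∀ ε : ℝ, 0 < ε → ∀ n : ℕ, 1 ≤ n →
      (μ {ω | ε ≤ ⨆ t : Set.Icc (0:ℝ) 1,
          |(n : ℝ)⁻¹ * (∑ k ∈ Finset.range n,
            (if ξ k ω ≤ (t : ℝ) then (1:ℝ) else 0)) - F t|}).toReal
        ≤ 2 * Real.exp (-(n : ℝ) *
            ((ε / 8) * (Real.log (1 + ε ^ 2 / 32) - 1)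
              + (4 / ε) * Real.log (1 + ε ^ 2 / 32))) :=
  stmt3_general (mΩ := mΩ) μ ξ hmeas hindep hident F hFdef hFcont

end
end

section
/- Let θ ∈ (0,T], F a continuous distribution function with F(θ) < 1, and w ∈ L²(dF) on [0,θ]. If (1 − F(θ))²·(∫₀^θ w_s/(1 − F(s)) dF(s))² = ε², then ∫₀^θ w_s² dF(s) ≥ ε²/( F(θ)·(1 − F(θ)) ). Moreover this lower bound is attained when w_s = l/(1 − F(s)) for an appropriate constant l. -/
/-!
By Cauchy–Schwarz in `L²(dF)` on `(0, θ]`,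
`(∫ w/(1-F) dF)² ≤ ∫ w² dF · ∫ dF/(1-F)²`, and the boundary condition makes the left side
`ε²/(1-F θ)²`. A continuous `F` pushes `dF` on `(0, θ]` forward to Lebesgue measure on
`(0, F θ]`, so `∫ dF/(1-F)² = ∫₀^{F θ} dy/(1-y)² = F θ/(1-F θ)`. Equality in Cauchy–Schwarz
holds for `w` proportional to `1/(1-F)`, which gives the extremal control.
-/

open MeasureTheory Set

theorem sq_integral_mul_le_integral_sq_mul_integral_sq {α : Type*} [MeasurableSpace α]
    {μ : Measure α} {f g : α → ℝ} (hf : MemLp f 2 μ) (hg : MemLp g 2 μ) :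
    (∫ x, f x * g x ∂μ) ^ 2 ≤ (∫ x, f x ^ 2 ∂μ) * ∫ x, g x ^ 2 ∂μ := by
  have holder := integral_mul_norm_le_Lp_mul_Lq Real.HolderConjugate.two_two
    (by simpa using hf) (by simpa using hg)
  simp only [Real.norm_eq_abs, ← Real.sqrt_eq_rpow, Real.rpow_two, sq_abs] at holder
  calc (∫ x, f x * g x ∂μ) ^ 2 ≤ (∫ x, |f x| * |g x| ∂μ) ^ 2 := by
        rw [← sq_abs]
        gcongr
        simpa only [abs_mul] using abs_integral_le_integral_abs (f := fun x => f x * g x)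
    _ ≤ (√(∫ x, f x ^ 2 ∂μ) * √(∫ x, g x ^ 2 ∂μ)) ^ 2 := by gcongr
    _ = _ := by
        rw [mul_pow, Real.sq_sqrt (integral_nonneg fun x => sq_nonneg _),
          Real.sq_sqrt (integral_nonneg fun x => sq_nonneg _)]

section InvOneSubSq

variable {t : ℝ} (ht : t < 1)
include ht

theorem one_sub_ne_zero_of_mem_uIcc_zero {y : ℝ} (hy : y ∈ uIcc 0 t) : 1 - y ≠ 0 :=
  (sub_pos.2 (hy.2.trans_lt (max_lt one_pos ht))).ne'

theorem intervalIntegrable_inv_one_sub_sq :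
    IntervalIntegrable (fun y => ((1 - y)⁻¹) ^ 2) volume 0 t :=
  (((continuousOn_const.sub continuousOn_id).inv₀
    fun _ => one_sub_ne_zero_of_mem_uIcc_zero ht).pow 2).intervalIntegrable

theorem integral_inv_one_sub_sq : ∫ y in (0)..t, ((1 - y)⁻¹) ^ 2 = t / (1 - t) := by
  have hderiv : ∀ y ∈ uIcc 0 t, HasDerivAt (fun y => (1 - y)⁻¹) (((1 - y)⁻¹) ^ 2) y :=
    fun y hy => ((hasDerivAt_inv (one_sub_ne_zero_of_mem_uIcc_zero ht hy)).comp y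
      ((hasDerivAt_id y).const_sub 1)).congr_deriv (by rw [inv_pow]; ring)
  rw [intervalIntegral.integral_eq_sub_of_hasDerivAt hderiv
    (intervalIntegrable_inv_one_sub_sq ht)]
  have : 1 - t ≠ 0 := (sub_pos.2 ht).ne'
  field_simp
  ring

end InvOneSubSq

namespace StieltjesFunction

variable (F : StieltjesFunction ℝ) (hF : Continuous F) {a b : ℝ}
include hF

theorem exists_preimage_Iic_inter_Ioc_eq_Ioc (hab : a ≤ b) {y : ℝ} (hy : y ∈ Icc (F a) (F b)) :
    ∃ c ∈ Icc a b, F c = y ∧ F ⁻¹' Iic y ∩ Ioc a b = Ioc a c := by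
  obtain ⟨c₀, hc₀, hFc₀⟩ := intermediate_value_Icc hab hF.continuousOn hy
  obtain ⟨c, ⟨hc, hFc⟩, hc_max⟩ :=
    (isCompact_Icc.inter_right (isClosed_Iic.preimage hF)).exists_isGreatest
      ⟨a, left_mem_Icc.2 hab, hy.1⟩
  refine ⟨c, hc, le_antisymm hFc (hFc₀ ▸ F.mono (hc_max ⟨hc₀, hFc₀.le⟩)), ?_⟩
  ext s
  refine ⟨fun ⟨hFs, hs⟩ => ⟨hs.1, hc_max ⟨Ioc_subset_Icc_self hs, hFs⟩⟩,
    fun hs => ⟨(F.mono hs.2).trans hFc, hs.1, hs.2.trans hc.2⟩⟩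

theorem map_measure_restrict_Ioc (hab : a ≤ b) :
    (F.measure.restrict (Ioc a b)).map F = volume.restrict (Ioc (F a) (F b)) := by
  have : IsFiniteMeasure (F.measure.restrict (Ioc a b)) :=
    isFiniteMeasure_restrict.2 (by simp [F.measure_Ioc])
  refine Measure.ext_of_Iic _ _ fun x => ?_
  rw [Measure.map_apply hF.measurable measurableSet_Iic,
    Measure.restrict_apply (hF.measurable measurableSet_Iic),
    Measure.restrict_apply measurableSet_Iic]
  rcases lt_or_ge x (F a) with hxa | hax
  · have h₁ : F ⁻¹' Iic x ∩ Ioc a b = ∅ :=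
      eq_empty_of_forall_notMem fun s ⟨hFs, hs⟩ => (hxa.trans_le (F.mono hs.1.le)).not_ge hFs
    have h₂ : Iic x ∩ Ioc (F a) (F b) = ∅ :=
      eq_empty_of_forall_notMem fun y ⟨hyx, hy⟩ => (hxa.trans hy.1).not_ge hyx
    simp [h₁, h₂]
  rcases le_or_gt (F b) x with hbx | hxb
  · have h₁ : F ⁻¹' Iic x ∩ Ioc a b = Ioc a b :=
      inter_eq_right.2 fun s hs => (F.mono hs.2).trans hbx
    have h₂ : Iic x ∩ Ioc (F a) (F b) = Ioc (F a) (F b) :=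
      inter_eq_right.2 fun y hy => hy.2.trans hbx
    rw [h₁, h₂, F.measure_Ioc, Real.volume_Ioc]
  · obtain ⟨c, -, hFc, hc⟩ := F.exists_preimage_Iic_inter_Ioc_eq_Ioc hF hab ⟨hax, hxb.le⟩
    rw [hc, F.measure_Ioc, hFc, Iic_inter_Ioc_of_le hxb.le, Real.volume_Ioc]

theorem setIntegral_comp_Ioc (hab : a ≤ b) {E : Type*} [NormedAddCommGroup E] [NormedSpace ℝ E]
    {g : ℝ → E} (hg : AEStronglyMeasurable g (volume.restrict (Ioc (F a) (F b)))) :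
    ∫ s in Ioc a b, g (F s) ∂F.measure = ∫ y in Ioc (F a) (F b), g y := by
  rw [← F.map_measure_restrict_Ioc hF hab] at hg ⊢
  exact (integral_map hF.measurable.aemeasurable hg).symm

theorem integrableOn_comp_Ioc_iff (hab : a ≤ b) {E : Type*} [NormedAddCommGroup E] {g : ℝ → E}
    (hg : AEStronglyMeasurable g (volume.restrict (Ioc (F a) (F b)))) :
    IntegrableOn (fun s => g (F s)) (Ioc a b) F.measure ↔ IntegrableOn g (Ioc (F a) (F b)) := by
  rw [← F.map_measure_restrict_Ioc hF hab] at hg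
  rw [IntegrableOn, IntegrableOn, ← F.map_measure_restrict_Ioc hF hab]
  exact (integrable_map_measure hg hF.measurable.aemeasurable).symm

variable {θ : ℝ} (hF0 : F 0 = 0) (hθ : 0 ≤ θ) (hFθ : F θ < 1)
include hF0 hθ hFθ

theorem integrableOn_inv_one_sub_sq :
    IntegrableOn (fun s => ((1 - F s)⁻¹) ^ 2) (Ioc 0 θ) F.measure := by
  refine (F.integrableOn_comp_Ioc_iff hF hθ (g := fun y => ((1 - y)⁻¹) ^ 2) (by fun_prop)).2 ?_
  rw [hF0, ← intervalIntegrable_iff_integrableOn_Ioc_of_le (hF0 ▸ F.mono hθ)]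
  exact intervalIntegrable_inv_one_sub_sq hFθ

theorem setIntegral_inv_one_sub_sq :
    ∫ s in Ioc 0 θ, ((1 - F s)⁻¹) ^ 2 ∂F.measure = F θ / (1 - F θ) := by
  rw [F.setIntegral_comp_Ioc hF hθ (g := fun y => ((1 - y)⁻¹) ^ 2) (by fun_prop), hF0,
    ← intervalIntegral.integral_of_le (hF0 ▸ F.mono hθ), integral_inv_one_sub_sq hFθ]

end StieltjesFunction

theorem stmt15_general (F : StieltjesFunction ℝ) (hFcont : Continuous F) (hF0 : F 0 = 0)
    (T θ ε : ℝ) (hθ : θ ∈ Set.Ioc (0:ℝ) T)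
    (hFθ0 : 0 < F θ) (hFθ1 : F θ < 1)
    (w : ℝ → ℝ) (hw : Measurable w)
    (hwint : IntegrableOn (fun s => (w s) ^ 2) (Set.Ioc 0 θ) F.measure)
    (hcon : (1 - F θ) ^ 2 * (∫ s in Set.Ioc 0 θ, w s / (1 - F s) ∂F.measure) ^ 2
        = ε ^ 2) :
    ε ^ 2 / (F θ * (1 - F θ)) ≤ ∫ s in Set.Ioc 0 θ, (w s) ^ 2 ∂F.measure
    ∧ ∃ l : ℝ,
        (1 - F θ) ^ 2 * (∫ s in Set.Ioc 0 θ,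
            (l / (1 - F s)) / (1 - F s) ∂F.measure) ^ 2 = ε ^ 2
        ∧ (∫ s in Set.Ioc 0 θ, (l / (1 - F s)) ^ 2 ∂F.measure)
            = ε ^ 2 / (F θ * (1 - F θ)) := by
  have hK := F.setIntegral_inv_one_sub_sq hFcont hF0 hθ.1.le hFθ1
  have hCS := sq_integral_mul_le_integral_sq_mul_integral_sq
    ((memLp_two_iff_integrable_sq hw.aestronglyMeasurable).2 hwint)
    ((memLp_two_iff_integrable_sq (by fun_prop)).2
      (F.integrableOn_inv_one_sub_sq hFcont hF0 hθ.1.le hFθ1))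
  simp only [← div_eq_mul_inv, hK] at hCS
  have h1F : 0 < 1 - F θ := sub_pos.2 hFθ1
  refine ⟨?_, ε / F θ, ?_, ?_⟩
  · rw [div_le_iff₀ (by positivity), ← hcon]
    calc _ ≤ (1 - F θ) ^ 2 * ((∫ s in Set.Ioc 0 θ, w s ^ 2 ∂F.measure) * (F θ / (1 - F θ))) := by
          gcongr
      _ = _ := by field_simp
  · simp only [show ∀ s, ε / F θ / (1 - F s) / (1 - F s) = ε / F θ * ((1 - F s)⁻¹) ^ 2
      from fun s => by ring]
    rw [integral_const_mul, hK]
    field_simp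
  · simp only [show ∀ s, (ε / F θ / (1 - F s)) ^ 2 = (ε / F θ) ^ 2 * ((1 - F s)⁻¹) ^ 2
      from fun s => by ring]
    rw [integral_const_mul, hK]
    field_simp

/-- Cauchy–Schwarz lower bound for the energy of a control `w`
satisfying the boundary constraint
`(1-F θ)²·(∫₀^θ w/(1-F) dF)² = ε²`, namely
`∫₀^θ w² dF ≥ ε²/(F θ·(1-F θ))`; the bound is attained for `w = l/(1-F)`. -/
theorem stmt15 (F : StieltjesFunction ℝ) (hFcont : Continuous F) (hF0 : F 0 = 0)
    (T θ ε : ℝ) (hθ : θ ∈ Set.Ioc (0:ℝ) T) (hε : 0 < ε)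
    (hFθ0 : 0 < F θ) (hFθ1 : F θ < 1)
    (w : ℝ → ℝ) (hw : Measurable w)
    (hwint : IntegrableOn (fun s => (w s) ^ 2) (Set.Ioc 0 θ) F.measure)
    (hcon : (1 - F θ) ^ 2 * (∫ s in Set.Ioc 0 θ, w s / (1 - F s) ∂F.measure) ^ 2
        = ε ^ 2) :
    ε ^ 2 / (F θ * (1 - F θ)) ≤ ∫ s in Set.Ioc 0 θ, (w s) ^ 2 ∂F.measure
    ∧ ∃ l : ℝ,
        (1 - F θ) ^ 2 * (∫ s in Set.Ioc 0 θ,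
            (l / (1 - F s)) / (1 - F s) ∂F.measure) ^ 2 = ε ^ 2
        ∧ (∫ s in Set.Ioc 0 θ, (l / (1 - F s)) ^ 2 ∂F.measure)
            = ε ^ 2 / (F θ * (1 - F θ)) :=
  stmt15_general F hFcont hF0 T θ ε hθ hFθ0 hFθ1 w hw hwint hcon
end
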